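/- arXiv:1507.00943 — 8 statements merged into one kernel-verified Lean document; each statement's English description precedes it below -/
import Mathlib

section
/- The sequence of subspaces defined by V₀ = ker C and V_k = A₁⁻¹V_{k−1} ∩ A₂⁻¹V_{k−1} ∩ ker C is non-increasing (V_{k+1} ⊆ V_k for all k), and stabilizes after at most n steps: V_n = V_{n+1}, and the limit V_n equals the intersection of ker(CA^α) over all words A^α in A₁, A₂ of length at most n. -/
/-- Ordered product of matrices indexed by a word in {1,2} (encoded as Bool:
`false` ↦ A₁, `true` ↦ A₂); the empty word gives the identity. -/
def wordProd {n : ℕ} (A₁ A₂ : Matrix (Fin n) (Fin n) ℝ) (α : List Bool) :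
    Matrix (Fin n) (Fin n) ℝ :=
  (α.map (fun b => if b then A₂ else A₁)).prod

lemma wordProd_nil {n : ℕ} (A₁ A₂ : Matrix (Fin n) (Fin n) ℝ) :
    wordProd A₁ A₂ [] = 1 := rfl

lemma wordProd_concat {n : ℕ} (A₁ A₂ : Matrix (Fin n) (Fin n) ℝ) (α : List Bool) (b : Bool) :
    wordProd A₁ A₂ (α ++ [b]) = wordProd A₁ A₂ α * (if b then A₂ else A₁) := by
  simp [wordProd]

lemma aux_eq (n q : ℕ) (A₁ A₂ : Matrix (Fin n) (Fin n) ℝ)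
    (C : Matrix (Fin q) (Fin n) ℝ)
    (V : ℕ → Submodule ℝ (Fin n → ℝ))
    (hV0 : V 0 = LinearMap.ker C.mulVecLin)
    (hVk : ∀ k : ℕ, V (k + 1) =
      (V k).comap A₁.mulVecLin ⊓ (V k).comap A₂.mulVecLin ⊓ LinearMap.ker C.mulVecLin) :
    ∀ k : ℕ, V k = ⨅ (α : List Bool) (_ : α.length ≤ k),
      LinearMap.ker (C * wordProd A₁ A₂ α).mulVecLin := by
  intro k
  induction k with
  | zero =>
    rw [hV0]
    apply le_antisymm
    · refine le_iInf fun α => le_iInf fun hα => ?_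
      have : α = [] := List.length_eq_zero_iff.mp (Nat.le_zero.mp hα)
      subst this
      simp [wordProd_nil]
    · refine iInf_le_of_le [] (iInf_le_of_le (by simp) ?_)
      simp [wordProd_nil]
  | succ k ih =>
    rw [hVk k, ih]
    ext x
    simp only [Submodule.mem_inf, Submodule.mem_comap, Submodule.mem_iInf,
      LinearMap.mem_ker, Matrix.mulVecLin_apply]
    constructor
    · rintro ⟨⟨h1, h2⟩, h3⟩ β hβ
      rcases List.eq_nil_or_concat β with rfl | ⟨α, b, rfl⟩
      · simpa [wordProd_nil] using h3
      · simp only [List.concat_eq_append] at hβ ⊢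
        have hα : α.length ≤ k := by simpa using hβ
        rw [wordProd_concat, ← Matrix.mul_assoc, ← Matrix.mulVec_mulVec]
        cases b
        · simpa using h1 α hα
        · simpa using h2 α hα
    · intro H
      refine ⟨⟨fun α hα => ?_, fun α hα => ?_⟩, ?_⟩
      · have := H (α ++ [false]) (by simpa using Nat.succ_le_succ hα)
        rw [Matrix.mulVec_mulVec, Matrix.mul_assoc]
        simpa [wordProd_concat] using this
      · have := H (α ++ [true]) (by simpa using Nat.succ_le_succ hα)
        rw [Matrix.mulVec_mulVec, Matrix.mul_assoc]
        simpa [wordProd_concat] using this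
      · simpa [wordProd_nil] using H [] (by simp)

/-- The sequence V₀ = ker C, V_k = A₁⁻¹V_{k−1} ∩ A₂⁻¹V_{k−1} ∩ ker C
is non-increasing, stabilizes after at most n steps (V_n = V_{n+1}), and
V_n = ⋂_{‖α‖ ≤ n} ker(C A^α). -/
theorem stmt_4 (n q : ℕ) (A₁ A₂ : Matrix (Fin n) (Fin n) ℝ)
    (C : Matrix (Fin q) (Fin n) ℝ)
    (V : ℕ → Submodule ℝ (Fin n → ℝ))
    (hV0 : V 0 = LinearMap.ker C.mulVecLin)
    (hVk : ∀ k : ℕ, V (k + 1) =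
      (V k).comap A₁.mulVecLin ⊓ (V k).comap A₂.mulVecLin ⊓ LinearMap.ker C.mulVecLin) :
    (∀ k : ℕ, V (k + 1) ≤ V k) ∧
    V n = V (n + 1) ∧
    V n = ⨅ (α : List Bool) (_ : α.length ≤ n),
      LinearMap.ker (C * wordProd A₁ A₂ α).mulVecLin := by
  have aux := aux_eq n q A₁ A₂ C V hV0 hVk
  have hmono : ∀ k : ℕ, V (k + 1) ≤ V k := by
    intro k
    rw [aux k, aux (k + 1)]
    exact le_iInf fun α => le_iInf fun hα =>
      iInf_le_of_le α (iInf_le_of_le (hα.trans (Nat.le_succ k)) le_rfl)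
  refine ⟨hmono, ?_, aux n⟩
  -- stabilization
  have key : ∀ k, V k = V (k + 1) → ∀ m, k ≤ m → V m = V (m + 1) := by
    intro k hk m hm
    induction m with
    | zero => exact Nat.le_zero.mp hm ▸ hk
    | succ m ihm =>
      rcases Nat.le_succ_iff.mp hm with h | h
      · have h1 : V m = V (m + 1) := ihm h
        rw [hVk (m + 1), ← h1, ← hVk m]
        exact h1
      · subst h
        exact hk
  have hex : ∃ k ≤ n, V k = V (k + 1) := by
    by_contra hc
    push_neg at hc
    have hstrict : ∀ k ≤ n, V (k + 1) < V k := fun k hk =>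
      lt_of_le_of_ne (hmono k) (fun h => hc k hk h.symm)
    have hrank : ∀ k ≤ n + 1, Module.finrank ℝ (V k) + k ≤ n := by
      intro k hk
      induction k with
      | zero => simpa using (Submodule.finrank_le (V 0)).trans_eq (Module.finrank_fin_fun ℝ)
      | succ k ihk =>
        have hk' : k ≤ n := Nat.lt_succ_iff.mp hk
        have h1 := Submodule.finrank_lt_finrank_of_lt (hstrict k hk')
        have h2 := ihk (hk'.trans (Nat.le_succ n))
        omega
    have := hrank (n + 1) le_rfl
    omega
  obtain ⟨k, hk, heq⟩ := hex
  exact key k heq n hk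
end

section
/- For a subspace W ⊆ ℝⁿ, the following are equivalent: (i) there exist matrices D₁, D₂: ℝ^q → ℝⁿ such that (A₁ + D₁C)W ⊆ W and (A₂ + D₂C)W ⊆ W; (ii) A₁(W ∩ ker C) + A₂(W ∩ ker C) ⊆ W. -/
set_option maxHeartbeats 1000000
set_option synthInstance.maxHeartbeats 400000

lemma stmt_7_aux (n q : ℕ) (A : Matrix (Fin n) (Fin n) ℝ)
    (C : Matrix (Fin q) (Fin n) ℝ) (W : Submodule ℝ (Fin n → ℝ))
    (h : (W ⊓ LinearMap.ker C.mulVecLin).map A.mulVecLin ≤ W) :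
    ∃ D : Matrix (Fin n) (Fin q) ℝ, W.map (A + D * C).mulVecLin ≤ W := by
  set K : Submodule ℝ W := (W ⊓ LinearMap.ker C.mulVecLin).comap W.subtype with hK
  obtain ⟨U, hU⟩ := K.exists_isCompl
  set f : U →ₗ[ℝ] (Fin q → ℝ) := C.mulVecLin ∘ₗ W.subtype ∘ₗ U.subtype with hf_def
  have hf : LinearMap.ker f = ⊥ := by
    rw [LinearMap.ker_eq_bot']
    intro u hu
    have hmem : (u : W) ∈ K ⊓ U := by
      refine ⟨?_, u.2⟩
      simp only [hK, Submodule.mem_comap, Submodule.mem_inf]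
      exact ⟨(u : W).2, hu⟩
    have := hU.disjoint.le_bot hmem
    rw [Submodule.mem_bot] at this
    exact Subtype.ext this
  obtain ⟨g, hg⟩ := LinearMap.exists_leftInverse_of_injective (K := ℝ) (V := U) (V' := Fin q → ℝ) f hf
  set Dl : (Fin q → ℝ) →ₗ[ℝ] (Fin n → ℝ) :=
    -(A.mulVecLin ∘ₗ W.subtype ∘ₗ U.subtype ∘ₗ g) with hDl
  refine ⟨LinearMap.toMatrix' Dl, ?_⟩
  have hD : (LinearMap.toMatrix' Dl).mulVecLin = Dl := Matrix.toLin'_toMatrix' Dl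
  rintro _ ⟨x, hx, rfl⟩
  obtain ⟨y, z, hy, hz, hyz⟩ :=
    Submodule.codisjoint_iff_exists_add_eq.mp hU.codisjoint (⟨x, hx⟩ : W)
  have hxeq : x = (y : Fin n → ℝ) + (z : Fin n → ℝ) := by
    have := congrArg (Subtype.val) hyz
    simpa using this.symm
  have hyK : (y : Fin n → ℝ) ∈ W ⊓ LinearMap.ker C.mulVecLin := hy
  have hCy : C.mulVecLin (y : Fin n → ℝ) = 0 := hyK.2
  have hgz : g (f ⟨z, hz⟩) = ⟨z, hz⟩ := by
    rw [← LinearMap.comp_apply, hg]; rfl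
  have hfz : f ⟨z, hz⟩ = C.mulVecLin (z : Fin n → ℝ) := rfl
  have hDC : Dl (C.mulVecLin x) = -(A.mulVecLin (z : Fin n → ℝ)) := by
    rw [hxeq, map_add, hCy, zero_add, ← hfz, hDl]
    simp only [LinearMap.neg_apply, LinearMap.comp_apply, hgz]
    rfl
  have : (A + LinearMap.toMatrix' Dl * C).mulVecLin x
      = A.mulVecLin (y : Fin n → ℝ) := by
    rw [Matrix.mulVecLin_add, Matrix.mulVecLin_mul, hD]
    rw [LinearMap.add_apply, LinearMap.comp_apply, hDC]
    rw [hxeq, map_add]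
    abel
  rw [this]
  exact h ⟨(y : Fin n → ℝ), hyK, rfl⟩

/-- W is conditioned invariant, i.e. there exist output injections
D₁, D₂ with (A₁ + D₁C)W ⊆ W and (A₂ + D₂C)W ⊆ W, iff
A₁(W ∩ ker C) + A₂(W ∩ ker C) ⊆ W. -/
theorem stmt_7 (n q : ℕ) (A₁ A₂ : Matrix (Fin n) (Fin n) ℝ)
    (C : Matrix (Fin q) (Fin n) ℝ) (W : Submodule ℝ (Fin n → ℝ)) :
    (∃ D₁ D₂ : Matrix (Fin n) (Fin q) ℝ,
      W.map (A₁ + D₁ * C).mulVecLin ≤ W ∧ W.map (A₂ + D₂ * C).mulVecLin ≤ W) ↔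
    ((W ⊓ LinearMap.ker C.mulVecLin).map A₁.mulVecLin ⊔
      (W ⊓ LinearMap.ker C.mulVecLin).map A₂.mulVecLin ≤ W) := by
  constructor
  · rintro ⟨D₁, D₂, h₁, h₂⟩
    rw [sup_le_iff]
    constructor <;> rintro _ ⟨x, ⟨hxW, hxC⟩, rfl⟩
    · have key : (A₁ + D₁ * C).mulVecLin x = A₁.mulVecLin x := by
        rw [Matrix.mulVecLin_add, Matrix.mulVecLin_mul]
        simp only [LinearMap.add_apply, LinearMap.comp_apply,
          LinearMap.mem_ker.mp hxC, map_zero, add_zero]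
      exact key ▸ h₁ ⟨x, hxW, rfl⟩
    · have key : (A₂ + D₂ * C).mulVecLin x = A₂.mulVecLin x := by
        rw [Matrix.mulVecLin_add, Matrix.mulVecLin_mul]
        simp only [LinearMap.add_apply, LinearMap.comp_apply,
          LinearMap.mem_ker.mp hxC, map_zero, add_zero]
      exact key ▸ h₂ ⟨x, hxW, rfl⟩
  · intro h
    rw [sup_le_iff] at h
    obtain ⟨D₁, hD₁⟩ := stmt_7_aux n q A₁ C W h.1
    obtain ⟨D₂, hD₂⟩ := stmt_7_aux n q A₂ C W h.2
    exact ⟨D₁, D₂, hD₁, hD₂⟩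
end

section
/- If W is a conditioned invariant subspace (A₁(W ∩ ker C) + A₂(W ∩ ker C) ⊆ W), then the subspace W_∞ = ℓ∞(ℤ, W) of ℓ∞(ℤ, ℝⁿ) satisfies 𝒜(W_∞ ∩ ker 𝒞) ⊆ W_∞, where (𝒜x)_k = A₁x_k + A₂x_{k+1} and (𝒞x)_k = Cx_k; and conversely. -/
open ENNReal

/-- W is conditioned invariant
(A₁(W ∩ ker C) + A₂(W ∩ ker C) ⊆ W) iff the subspace W_∞ = ℓ∞(ℤ, W) of
ℓ∞(ℤ, ℝⁿ) satisfies 𝒜(W_∞ ∩ ker 𝒞) ⊆ W_∞, where (𝒜x)_k = A₁x_k + A₂x_{k+1}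
and (𝒞x)_k = Cx_k. -/
theorem stmt_10 (n q : ℕ) (A₁ A₂ : Matrix (Fin n) (Fin n) ℝ)
    (C : Matrix (Fin q) (Fin n) ℝ) (W : Submodule ℝ (Fin n → ℝ)) :
    ((W ⊓ LinearMap.ker C.mulVecLin).map A₁.mulVecLin ⊔
        (W ⊓ LinearMap.ker C.mulVecLin).map A₂.mulVecLin ≤ W) ↔
      (∀ x : lp (fun _ : ℤ => (Fin n → ℝ)) ⊤,
        (∀ k : ℤ, x k ∈ W) → (∀ k : ℤ, C.mulVec (x k) = 0) →
        ∀ k : ℤ, A₁.mulVec (x k) + A₂.mulVec (x (k + 1)) ∈ W) := by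
  constructor
  · intro h x hW hC k
    have h1 : A₁.mulVec (x k) ∈ (W ⊓ LinearMap.ker C.mulVecLin).map A₁.mulVecLin :=
      ⟨x k, ⟨hW k, hC k⟩, rfl⟩
    have h2 : A₂.mulVec (x (k+1)) ∈ (W ⊓ LinearMap.ker C.mulVecLin).map A₂.mulVecLin :=
      ⟨x (k+1), ⟨hW (k+1), hC (k+1)⟩, rfl⟩
    exact W.add_mem (h (Submodule.mem_sup_left h1)) (h (Submodule.mem_sup_right h2))
  · intro h
    have key : ∀ v : Fin n → ℝ, v ∈ W ⊓ LinearMap.ker C.mulVecLin →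
        A₁.mulVec v ∈ W ∧ A₂.mulVec v ∈ W := by
      intro v hv
      obtain ⟨hvW, hvC⟩ := Submodule.mem_inf.mp hv
      set f : ∀ _ : ℤ, Fin n → ℝ := fun k => if k = 0 then v else 0 with hf
      have hmem : Memℓp f ⊤ := by
        apply memℓp_infty
        refine ⟨‖v‖, ?_⟩
        rintro r ⟨k, rfl⟩
        by_cases hk : k = 0 <;> simp [hf, hk]
      set x : lp (fun _ : ℤ => (Fin n → ℝ)) ⊤ := ⟨f, hmem⟩ with hx
      have hxk : ∀ k : ℤ, x k = if k = 0 then v else 0 := fun k => rfl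
      have hbig := h x (fun k => by
          rw [hxk]; by_cases hk : k = 0 <;> simp [hk, hvW, W.zero_mem])
        (fun k => by
          rw [hxk]; by_cases hk : k = 0 <;>
            simp [hk, Matrix.mulVec_zero, show C.mulVec v = 0 from hvC])
      constructor
      · have := hbig 0
        simp only [hxk, show (0:ℤ)+1 = 1 from rfl] at this
        simpa [hf, Matrix.mulVec_zero] using this
      · have := hbig (-1)
        simp only [hxk, show (-1:ℤ)+1 = 0 from rfl] at this
        simpa [hf, Matrix.mulVec_zero] using this
    refine sup_le ?_ ?_ <;> rintro w ⟨v, hv, rfl⟩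
    · exact (key v hv).1
    · exact (key v hv).2
end

section
/- (2D Cayley–Hamilton consequence for the unobservable subspace) If x ∈ ⋂_{i+j<n, i,j≥0} ker(CA^{(i,j)}) then x ∈ ker(CA^{(i,j)}) for all i,j ≥ 0; that is, N = ⋂_{i,j≥0} ker(CA^{(i,j)}) = ⋂_{i+j<n} ker(CA^{(i,j)}). -/
/-- The FMII transition matrices A^{(i,j)}. -/
def Atrans {n : ℕ} (A₁ A₂ : Matrix (Fin n) (Fin n) ℝ) :
    ℕ → ℕ → Matrix (Fin n) (Fin n) ℝ
  | 0, 0 => 1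
  | i + 1, 0 => A₁ * Atrans A₁ A₂ i 0
  | 0, j + 1 => A₂ * Atrans A₁ A₂ 0 j
  | i + 1, j + 1 => A₁ * Atrans A₁ A₂ i (j + 1) + A₂ * Atrans A₁ A₂ (i + 1) j

open Polynomial Matrix


variable {n : ℕ} (A₁ A₂ : Matrix (Fin n) (Fin n) ℝ)

noncomputable def Bmat : Matrix (Fin n) (Fin n) (Polynomial ℝ) :=
  A₁.map Polynomial.C + A₂.map (fun a => Polynomial.C a * Polynomial.X)

noncomputable def phi (j : ℕ) :
    Matrix (Fin n) (Fin n) (Polynomial ℝ) →ₗ[ℝ] Matrix (Fin n) (Fin n) ℝ where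
  toFun M := M.map (fun p => p.coeff j)
  map_add' M N := by ext i k; simp [Matrix.map]
  map_smul' c M := by ext i k; simp [Matrix.map]

example : True := trivial

lemma phi_B_mul_zero (P : Matrix (Fin n) (Fin n) (Polynomial ℝ)) :
    phi 0 (Bmat A₁ A₂ * P) = A₁ * phi 0 P := by
  ext i k
  simp [phi, Bmat, Matrix.mul_apply, Polynomial.finset_sum_coeff, add_mul,
    Polynomial.mul_coeff_zero, mul_assoc]

lemma phi_B_mul_succ (j : ℕ) (P : Matrix (Fin n) (Fin n) (Polynomial ℝ)) :
    phi (j+1) (Bmat A₁ A₂ * P) = A₁ * phi (j+1) P + A₂ * phi j P := by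
  ext i k
  simp [phi, Bmat, Matrix.mul_apply, Polynomial.finset_sum_coeff, add_mul,
    mul_assoc, Polynomial.coeff_X_mul, ← Finset.sum_add_distrib]

lemma phi_pow_zero : ∀ m j : ℕ, m < j → phi j (Bmat A₁ A₂ ^ m) = 0 := by
  intro m
  induction m with
  | zero =>
    intro j hj
    ext i k
    match j, hj with
    | j + 1, _ => simp [phi, Matrix.one_apply, apply_ite (Polynomial.coeff · (j+1)), Polynomial.coeff_one]
  | succ m ih =>
    intro j hj
    match j, hj with
    | j + 1, hj =>
      rw [pow_succ', phi_B_mul_succ, ih (j+1) (by omega), ih j (by omega)]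
      simp

lemma phi_pow_eq : ∀ m i j : ℕ, i + j = m →
    phi j (Bmat A₁ A₂ ^ m) = Atrans A₁ A₂ i j := by
  intro m
  induction m with
  | zero =>
    intro i j hij
    obtain ⟨rfl, rfl⟩ : i = 0 ∧ j = 0 := by omega
    rw [Atrans]
    ext a b
    simp [phi, Matrix.one_apply, apply_ite (Polynomial.coeff · 0)]
  | succ m ih =>
    intro i j hij
    rw [pow_succ']
    match i, j, hij with
    | i + 1, 0, hij =>
      rw [phi_B_mul_zero, ih i 0 (by omega), Atrans]
    | 0, j + 1, hij =>
      rw [phi_B_mul_succ, ih 0 j (by omega), phi_pow_zero A₁ A₂ m (j+1) (by omega), Atrans]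
      simp
    | i + 1, j + 1, hij =>
      rw [phi_B_mul_succ, ih i (j+1) (by omega), ih (i+1) j (by omega), Atrans]

lemma phi_smul (j : ℕ) (c : Polynomial ℝ) (M : Matrix (Fin n) (Fin n) (Polynomial ℝ)) :
    phi j (c • M) = ∑ ab ∈ Finset.HasAntidiagonal.antidiagonal j, c.coeff ab.1 • phi ab.2 M := by
  ext i k
  simp [phi, Polynomial.coeff_mul, Matrix.sum_apply]

lemma B_pow_n : Bmat A₁ A₂ ^ n =
    ∑ k ∈ Finset.range n, (-(Bmat A₁ A₂).charpoly.coeff k) • Bmat A₁ A₂ ^ k := by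
  have h := (Bmat A₁ A₂).aeval_self_charpoly
  rw [Polynomial.aeval_eq_sum_range, (Bmat A₁ A₂).charpoly_natDegree_eq_dim,
    Fintype.card_fin, Finset.sum_range_succ] at h
  have hc : (Bmat A₁ A₂).charpoly.coeff n = 1 := by
    have hm := (Bmat A₁ A₂).charpoly_monic
    have hd : (Bmat A₁ A₂).charpoly.natDegree = n := by
      rw [(Bmat A₁ A₂).charpoly_natDegree_eq_dim, Fintype.card_fin]
    have h1 := hm.coeff_natDegree
    rw [hd] at h1
    exact h1
  rw [hc, one_smul] at h
  have := eq_neg_of_add_eq_zero_right h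
  rw [this, ← Finset.sum_neg_distrib]
  exact Finset.sum_congr rfl fun k _ => (neg_smul _ _).symm

lemma atrans_mem (S : Submodule ℝ (Matrix (Fin n) (Fin n) ℝ))
    (hS : ∀ i j : ℕ, i + j < n → Atrans A₁ A₂ i j ∈ S) :
    ∀ m i j : ℕ, i + j = m → Atrans A₁ A₂ i j ∈ S := by
  intro m
  induction m using Nat.strong_induction_on with
  | _ m ih =>
    intro i j hij
    by_cases hm : m < n
    · exact hS i j (hij ▸ hm)
    push_neg at hm
    rw [← phi_pow_eq A₁ A₂ m i j hij]
    have hmn : m - n + n = m := Nat.sub_add_cancel hm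
    have hB : Bmat A₁ A₂ ^ m = ∑ k ∈ Finset.range n,
        (-(Bmat A₁ A₂).charpoly.coeff k) • Bmat A₁ A₂ ^ (m - n + k) := by
      conv_lhs => rw [← hmn, pow_add, B_pow_n, Finset.mul_sum]
      refine Finset.sum_congr rfl fun k _ => ?_
      rw [Matrix.mul_smul, ← pow_add]
    rw [hB, map_sum]
    apply Submodule.sum_mem
    intro k hk
    rw [phi_smul]
    apply Submodule.sum_mem
    intro ab _
    apply Submodule.smul_mem
    rcases le_or_gt ab.2 (m - n + k) with hb | hb
    · rw [phi_pow_eq A₁ A₂ (m - n + k) (m - n + k - ab.2) ab.2 (by omega)]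
      exact ih (m - n + k) (by have := Finset.mem_range.mp hk; omega) _ _ (by omega)
    · rw [phi_pow_zero A₁ A₂ _ _ hb]
      exact S.zero_mem


/-- (2D Cayley–Hamilton consequence) The unobservable subspace
N = ⋂_{i,j≥0} ker(CA^{(i,j)}) equals ⋂_{i+j<n} ker(CA^{(i,j)}). -/
theorem stmt_14 (n q : ℕ) (A₁ A₂ : Matrix (Fin n) (Fin n) ℝ)
    (C : Matrix (Fin q) (Fin n) ℝ) :
    (⨅ (p : ℕ × ℕ), LinearMap.ker (C * Atrans A₁ A₂ p.1 p.2).mulVecLin) =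
      ⨅ (p : ℕ × ℕ) (_ : p.1 + p.2 < n),
        LinearMap.ker (C * Atrans A₁ A₂ p.1 p.2).mulVecLin := by
  apply le_antisymm
  · exact le_iInf fun p => le_iInf fun _ => iInf_le _ p
  · intro x hx
    simp only [Submodule.mem_iInf, LinearMap.mem_ker, Matrix.mulVecLin_apply] at hx ⊢
    intro p
    let ψ : Matrix (Fin n) (Fin n) ℝ →ₗ[ℝ] (Fin q → ℝ) :=
      { toFun := fun M => (C * M) *ᵥ x
        map_add' := fun M N => by rw [Matrix.mul_add, Matrix.add_mulVec]
        map_smul' := fun c M => by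
          simp only [RingHom.id_apply]; rw [Matrix.mul_smul, Matrix.smul_mulVec] }
    have := atrans_mem A₁ A₂ (LinearMap.ker ψ)
      (fun i j hij => by simpa [ψ] using hx (i, j) hij)
      (p.1 + p.2) p.1 p.2 rfl
    simpa [ψ] using this
end

section
/- Let Ŝ be a subspace of ℝⁿ⁺ᵒ that is invariant under both A₁ᵉ = [[A₁,0],[E₁C,F₁]] and A₂ᵉ = [[A₂,0],[E₂C,F₂]] and contained in ker[HC, M]. Then S = {x ∈ ℝⁿ : (x,0) ∈ Ŝ} satisfies A₁(S ∩ ker C) ⊆ S, A₂(S ∩ ker C) ⊆ S, and S ⊆ ker(HC); i.e., S is a conditioned invariant subspace of (C, A₁, A₂) contained in ker(HC). -/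
/-- If Ŝ ⊆ ℝⁿ⊕ℝᵒ is invariant under A₁ᵉ = [[A₁,0],[E₁C,F₁]] and
A₂ᵉ = [[A₂,0],[E₂C,F₂]] and contained in ker[HC, M], then
S = {x : (x,0) ∈ Ŝ} satisfies A₁(S ∩ ker C) ⊆ S, A₂(S ∩ ker C) ⊆ S and
S ⊆ ker(HC); i.e. S is a conditioned invariant subspace of (C,A₁,A₂) contained
in ker(HC). -/
theorem stmt_15 (n o q r : ℕ)
    (A₁ A₂ : Matrix (Fin n) (Fin n) ℝ) (C : Matrix (Fin q) (Fin n) ℝ)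
    (F₁ F₂ : Matrix (Fin o) (Fin o) ℝ) (E₁ E₂ : Matrix (Fin o) (Fin q) ℝ)
    (M : Matrix (Fin r) (Fin o) ℝ) (H : Matrix (Fin r) (Fin q) ℝ)
    (Shat : Submodule ℝ ((Fin n → ℝ) × (Fin o → ℝ)))
    (hinv1 : ∀ v ∈ Shat,
      (A₁.mulVec v.1, E₁.mulVec (C.mulVec v.1) + F₁.mulVec v.2) ∈ Shat)
    (hinv2 : ∀ v ∈ Shat,
      (A₂.mulVec v.1, E₂.mulVec (C.mulVec v.1) + F₂.mulVec v.2) ∈ Shat)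
    (hker : ∀ v ∈ Shat, H.mulVec (C.mulVec v.1) + M.mulVec v.2 = 0)
    (S : Submodule ℝ (Fin n → ℝ))
    (hS : S = Shat.comap (LinearMap.inl ℝ (Fin n → ℝ) (Fin o → ℝ))) :
    (∀ x ∈ S, C.mulVec x = 0 → A₁.mulVec x ∈ S ∧ A₂.mulVec x ∈ S) ∧
    (∀ x ∈ S, H.mulVec (C.mulVec x) = 0) := by
  subst hS
  constructor
  · intro x hx hCx
    have hx' : ((x, 0) : (Fin n → ℝ) × (Fin o → ℝ)) ∈ Shat := hx
    constructor
    · have h := hinv1 _ hx'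
      simpa [hCx, Matrix.mulVec_zero] using h
    · have h := hinv2 _ hx'
      simpa [hCx, Matrix.mulVec_zero] using h
  · intro x hx
    have hx' : ((x, 0) : (Fin n → ℝ) × (Fin o → ℝ)) ∈ Shat := hx
    have h := hker _ hx'
    simpa [Matrix.mulVec_zero] using h
end

section
/- (2D Lyapunov stability) If there exist symmetric positive definite matrices R₁, R₂ ∈ ℝ^{n×n} such that [A₁ A₂]ᵀ(R₁+R₂)[A₁ A₂] − diag(R₁,R₂) < 0 (negative definite as a 2n×2n matrix), then every solution of the autonomous FMII recursion x(i+1,j+1) = A₁x(i,j+1) + A₂x(i+1,j) with boundary data supported on finitely many points satisfies x(i,j) → 0 as i+j → ∞. -/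
open Matrix

lemma dotProduct_self_nonneg' {ι : Type*} [Fintype ι] (v : ι → ℝ) : 0 ≤ v ⬝ᵥ v :=
  Finset.sum_nonneg fun i _ => mul_self_nonneg (v i)

lemma dotProduct_self_pos' {ι : Type*} [Fintype ι] {v : ι → ℝ} (hv : v ≠ 0) : 0 < v ⬝ᵥ v :=
  lt_of_le_of_ne (dotProduct_self_nonneg' v) (by simp [eq_comm, hv])

lemma quad_cont {ι : Type*} [Fintype ι] (M : Matrix ι ι ℝ) :
    Continuous fun v : ι → ℝ => v ⬝ᵥ (M *ᵥ v) := by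
  simp only [dotProduct, mulVec]
  exact continuous_finset_sum _ fun i _ =>
    (continuous_apply i).mul (continuous_finset_sum _ fun j _ =>
      continuous_const.mul (continuous_apply j))

/-- Rayleigh-type lower bound for positive definite real matrices. -/
lemma posdef_lower {ι : Type*} [Fintype ι] {M : Matrix ι ι ℝ} (hM : M.PosDef) :
    ∃ δ > (0:ℝ), ∀ v : ι → ℝ, δ * (v ⬝ᵥ v) ≤ v ⬝ᵥ (M *ᵥ v) := by
  classical
  set S : Set (ι → ℝ) := {v | v ⬝ᵥ v = 1} with hS
  have hposv : ∀ v : ι → ℝ, v ≠ 0 → 0 < v ⬝ᵥ (M *ᵥ v) := by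
    intro v hv
    have := hM.dotProduct_mulVec_pos hv
    simpa using this
  have hmem : ∀ v : ι → ℝ, v ≠ 0 → ((Real.sqrt (v ⬝ᵥ v))⁻¹ • v) ∈ S := by
    intro v hv
    have h0 : 0 < v ⬝ᵥ v := dotProduct_self_pos' hv
    have hs : Real.sqrt (v ⬝ᵥ v) ^ 2 = v ⬝ᵥ v := Real.sq_sqrt h0.le
    have hsp : (0:ℝ) < Real.sqrt (v ⬝ᵥ v) := Real.sqrt_pos.2 h0
    simp only [hS, Set.mem_setOf_eq, smul_dotProduct, dotProduct_smul, smul_eq_mul]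
    field_simp
    linarith [hs]
  by_cases hne : S.Nonempty
  · have hclosed : IsClosed S := isClosed_eq (by
      simpa using quad_cont (1 : Matrix ι ι ℝ)) continuous_const
    have hsub : S ⊆ Metric.closedBall (0 : ι → ℝ) 1 := by
      intro v hv
      simp only [Metric.mem_closedBall, dist_zero_right]
      refine pi_norm_le_iff_of_nonneg zero_le_one |>.2 fun i => ?_
      have h1 : v i * v i ≤ v ⬝ᵥ v := by
        refine Finset.single_le_sum (f := fun j => v j * v j)
          (fun j _ => mul_self_nonneg _) (Finset.mem_univ i)
      rw [hv] at h1
      have := abs_le_one_iff_mul_self_le_one.2 (by simpa [abs_mul_abs_self] using h1)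
      simpa using this
    have hcompact : IsCompact S :=
      (isCompact_closedBall (0 : ι → ℝ) 1).of_isClosed_subset hclosed hsub
    obtain ⟨v₀, hv₀S, hmin'⟩ := hcompact.exists_isMinOn hne (quad_cont M).continuousOn
    have hv₀ne : v₀ ≠ 0 := by
      intro h; rw [h] at hv₀S; simp [hS] at hv₀S
    refine ⟨v₀ ⬝ᵥ (M *ᵥ v₀), hposv v₀ hv₀ne, fun v => ?_⟩
    by_cases hv : v = 0
    · simp [hv]
    · have h0 : 0 < v ⬝ᵥ v := dotProduct_self_pos' hv
      have hsp : (0:ℝ) < Real.sqrt (v ⬝ᵥ v) := Real.sqrt_pos.2 h0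
      have hs : Real.sqrt (v ⬝ᵥ v) ^ 2 = v ⬝ᵥ v := Real.sq_sqrt h0.le
      have hc2 : Real.sqrt (v ⬝ᵥ v) * Real.sqrt (v ⬝ᵥ v) = v ⬝ᵥ v :=
        Real.mul_self_sqrt h0.le
      have hmin2 := isMinOn_iff.1 hmin' _ (hmem v hv)
      rw [mulVec_smul, smul_dotProduct, dotProduct_smul, smul_eq_mul, smul_eq_mul] at hmin2
      rw [show (Real.sqrt (v ⬝ᵥ v))⁻¹ * ((Real.sqrt (v ⬝ᵥ v))⁻¹ * (v ⬝ᵥ (M *ᵥ v)))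
          = (v ⬝ᵥ (M *ᵥ v)) / (v ⬝ᵥ v) from by rw [← mul_assoc, ← mul_inv, hc2, div_eq_inv_mul]] at hmin2
      exact (le_div_iff₀ h0).1 hmin2
  · refine ⟨1, one_pos, fun v => ?_⟩
    by_cases hv : v = 0
    · simp [hv]
    · exact absurd ⟨_, hmem v hv⟩ hne

/-- Elementary upper bound for a real quadratic form. -/
lemma quad_upper {ι : Type*} [Fintype ι] (M : Matrix ι ι ℝ) :
    ∃ lam > (0:ℝ), ∀ v : ι → ℝ, v ⬝ᵥ (M *ᵥ v) ≤ lam * (v ⬝ᵥ v) := by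
  classical
  set C : ℝ := ∑ i, ∑ j, |M i j| with hC
  have hC0 : 0 ≤ C := Finset.sum_nonneg fun i _ =>
    Finset.sum_nonneg fun j _ => abs_nonneg _
  refine ⟨C + 1, by linarith, fun v => ?_⟩
  have hS0 : 0 ≤ v ⬝ᵥ v := dotProduct_self_nonneg' v
  have key : ∀ i j : ι, |v i * v j| ≤ v ⬝ᵥ v := by
    intro i j
    have hi : v i * v i ≤ v ⬝ᵥ v := Finset.single_le_sum (f := fun k => v k * v k)
      (fun k _ => mul_self_nonneg _) (Finset.mem_univ i)
    have hj : v j * v j ≤ v ⬝ᵥ v := Finset.single_le_sum (f := fun k => v k * v k)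
      (fun k _ => mul_self_nonneg _) (Finset.mem_univ j)
    rw [abs_mul]
    nlinarith [sq_nonneg (|v i| - |v j|), sq_abs (v i), sq_abs (v j),
      abs_nonneg (v i), abs_nonneg (v j)]
  calc v ⬝ᵥ (M *ᵥ v) = ∑ i, ∑ j, v i * (M i j * v j) := by
        simp [dotProduct, mulVec, Finset.mul_sum]
    _ ≤ ∑ i : ι, ∑ j : ι, |M i j| * (v ⬝ᵥ v) := by
        refine Finset.sum_le_sum fun i _ => Finset.sum_le_sum fun j _ => ?_
        calc v i * (M i j * v j) = M i j * (v i * v j) := by ring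
          _ ≤ |M i j * (v i * v j)| := le_abs_self _
          _ = |M i j| * |v i * v j| := abs_mul _ _
          _ ≤ |M i j| * (v ⬝ᵥ v) := mul_le_mul_of_nonneg_left (key i j) (abs_nonneg _)
    _ = C * (v ⬝ᵥ v) := by rw [hC]; simp [Finset.sum_mul]
    _ ≤ (C + 1) * (v ⬝ᵥ v) := mul_le_mul_of_nonneg_right (by linarith) hS0

/-- The horizontal concatenation [A₁ A₂] as an n × (n ⊕ n) matrix. -/
def hcat {n : ℕ} (A₁ A₂ : Matrix (Fin n) (Fin n) ℝ) :
    Matrix (Fin n) (Fin n ⊕ Fin n) ℝ :=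
  Matrix.of fun i => Sum.elim (fun j => A₁ i j) (fun j => A₂ i j)

lemma hcat_mulVec {n : ℕ} (A₁ A₂ : Matrix (Fin n) (Fin n) ℝ) (u v : Fin n → ℝ) :
    (hcat A₁ A₂) *ᵥ (Sum.elim u v) = A₁ *ᵥ u + A₂ *ᵥ v := by
  ext i
  simp [hcat, mulVec, dotProduct, Fintype.sum_sum_type]

lemma stmt_16_pointwise {n : ℕ} (A₁ A₂ R₁ R₂ : Matrix (Fin n) (Fin n) ℝ) {δ : ℝ}
    (hlow : ∀ z : Fin n ⊕ Fin n → ℝ, δ * (z ⬝ᵥ z) ≤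
      z ⬝ᵥ ((Matrix.fromBlocks R₁ 0 0 R₂ -
        (hcat A₁ A₂)ᵀ * (R₁ + R₂) * hcat A₁ A₂) *ᵥ z))
    (u v : Fin n → ℝ) :
    (A₁ *ᵥ u + A₂ *ᵥ v) ⬝ᵥ ((R₁ + R₂) *ᵥ (A₁ *ᵥ u + A₂ *ᵥ v)) + δ * (u ⬝ᵥ u + v ⬝ᵥ v)
      ≤ u ⬝ᵥ (R₁ *ᵥ u) + v ⬝ᵥ (R₂ *ᵥ v) := by
  classical
  set z : Fin n ⊕ Fin n → ℝ := Sum.elim u v with hz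
  have h1 : z ⬝ᵥ z = u ⬝ᵥ u + v ⬝ᵥ v := by
    simp [hz, dotProduct, Fintype.sum_sum_type]
  have h2 : z ⬝ᵥ ((Matrix.fromBlocks R₁ 0 0 R₂) *ᵥ z)
      = u ⬝ᵥ (R₁ *ᵥ u) + v ⬝ᵥ (R₂ *ᵥ v) := by
    rw [hz, fromBlocks_mulVec]
    simp [dotProduct, Fintype.sum_sum_type]
  have h3 : z ⬝ᵥ (((hcat A₁ A₂)ᵀ * (R₁ + R₂) * hcat A₁ A₂) *ᵥ z)
      = (A₁ *ᵥ u + A₂ *ᵥ v) ⬝ᵥ ((R₁ + R₂) *ᵥ (A₁ *ᵥ u + A₂ *ᵥ v)) := by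
    rw [← mulVec_mulVec, ← mulVec_mulVec, dotProduct_mulVec, vecMul_transpose,
      hz, hcat_mulVec]
  have h4 := hlow z
  rw [sub_mulVec, dotProduct_sub, h1, h2, h3] at h4
  linarith

/-- (2D Lyapunov stability) If there exist symmetric positive
definite R₁, R₂ with [A₁ A₂]ᵀ(R₁+R₂)[A₁ A₂] − diag(R₁,R₂) < 0, then every
solution of x(i+1,j+1) = A₁x(i,j+1) + A₂x(i+1,j) with boundary data supported
on finitely many points satisfies x(i,j) → 0 as i+j → ∞. -/
theorem stmt_16 (n : ℕ) (A₁ A₂ R₁ R₂ : Matrix (Fin n) (Fin n) ℝ)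
    (hR₁ : R₁.PosDef) (hR₂ : R₂.PosDef)
    (hLyap : (Matrix.fromBlocks R₁ 0 0 R₂ -
      (hcat A₁ A₂)ᵀ * (R₁ + R₂) * hcat A₁ A₂).PosDef)
    (x : ℕ → ℕ → (Fin n → ℝ))
    (hrec : ∀ i j : ℕ,
      x (i + 1) (j + 1) = A₁.mulVec (x i (j + 1)) + A₂.mulVec (x (i + 1) j))
    (hbd1 : {i : ℕ | x i 0 ≠ 0}.Finite)
    (hbd2 : {j : ℕ | x 0 j ≠ 0}.Finite) :
    ∀ ε > (0 : ℝ), ∃ N : ℕ, ∀ i j : ℕ, N ≤ i + j → ‖x i j‖ < ε := by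
  classical
  -- quadratic form bounds
  obtain ⟨δ₀, hδ₀, hlow⟩ := posdef_lower hLyap
  obtain ⟨lam, hlam, hup⟩ := quad_upper (R₁ + R₂)
  obtain ⟨μ, hμ, hlowR₁⟩ := posdef_lower hR₁
  obtain ⟨μ₂, hμ₂, hlowR₂⟩ := posdef_lower hR₂
  set δ : ℝ := min δ₀ lam with hδdef
  have hδ : 0 < δ := lt_min hδ₀ hlam
  have hδlam : δ ≤ lam := min_le_right _ _
  -- abbreviations
  set q1 : (Fin n → ℝ) → ℝ := fun v => v ⬝ᵥ (R₁ *ᵥ v) with hq1d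
  set q2 : (Fin n → ℝ) → ℝ := fun v => v ⬝ᵥ (R₂ *ᵥ v) with hq2d
  set Qf : (Fin n → ℝ) → ℝ := fun v => v ⬝ᵥ ((R₁ + R₂) *ᵥ v) with hQd
  set Nf : (Fin n → ℝ) → ℝ := fun v => v ⬝ᵥ v with hNd
  set E : ℕ → ℝ := fun k => ∑ p ∈ Finset.range (k + 1), Qf (x p (k - p)) with hEd
  set NS : ℕ → ℝ := fun k => ∑ p ∈ Finset.range (k + 1), Nf (x p (k - p)) with hNSd
  have hq1nn : ∀ v, 0 ≤ q1 v := fun v =>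
    le_trans (mul_nonneg hμ.le (dotProduct_self_nonneg' v)) (hlowR₁ v)
  have hq2nn : ∀ v, 0 ≤ q2 v := fun v =>
    le_trans (mul_nonneg hμ₂.le (dotProduct_self_nonneg' v)) (hlowR₂ v)
  have hQsplit : ∀ v, Qf v = q1 v + q2 v := by
    intro v
    simp only [hQd, hq1d, hq2d]
    rw [add_mulVec, dotProduct_add]
  have hQnn : ∀ v, 0 ≤ Qf v := fun v => by
    rw [hQsplit]; exact add_nonneg (hq1nn v) (hq2nn v)
  have hNnn : ∀ v, 0 ≤ Nf v := fun v => dotProduct_self_nonneg' v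
  have hEnn : ∀ k, 0 ≤ E k := fun k => Finset.sum_nonneg fun p _ => hQnn _
  have hElam : ∀ k, E k ≤ lam * NS k := by
    intro k
    rw [hEd, hNSd]
    simp only
    rw [Finset.mul_sum]
    exact Finset.sum_le_sum fun p _ => hup _
  have hQleE : ∀ i j : ℕ, Qf (x i j) ≤ E (i + j) := by
    intro i j
    have hmem : i ∈ Finset.range (i + j + 1) := Finset.mem_range.2 (by omega)
    have := Finset.single_le_sum (f := fun p => Qf (x p (i + j - p)))
      (fun p _ => hQnn _) hmem
    simpa [Nat.add_sub_cancel_left] using this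
  -- pointwise Lyapunov inequality
  have hpw : ∀ u v : Fin n → ℝ,
      Qf (A₁ *ᵥ u + A₂ *ᵥ v) + δ * (Nf u + Nf v) ≤ q1 u + q2 v := by
    intro u v
    have h1 := stmt_16_pointwise A₁ A₂ R₁ R₂ hlow u v
    have h2 : δ * (Nf u + Nf v) ≤ δ₀ * (u ⬝ᵥ u + v ⬝ᵥ v) := by
      have : Nf u + Nf v = u ⬝ᵥ u + v ⬝ᵥ v := rfl
      rw [this]
      exact mul_le_mul_of_nonneg_right (min_le_left _ _)
        (add_nonneg (dotProduct_self_nonneg' u) (dotProduct_self_nonneg' v))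
    simp only [hQd, hq1d, hq2d]
    linarith
  -- the key diagonal energy step
  have hstep : ∀ k : ℕ,
      E (k + 2) ≤ Qf (x 0 (k + 2)) + Qf (x (k + 2) 0) + E (k + 1) - δ * NS (k + 1) := by
    intro k
    -- split the diagonal sum
    have hsplit : E (k + 2) = Qf (x 0 (k + 2)) +
        (∑ i ∈ Finset.range (k + 1), Qf (x (i + 1) (k + 1 - i))) + Qf (x (k + 2) 0) := by
      rw [hEd]
      simp only
      rw [show k + 2 + 1 = (k + 2) + 1 from rfl, Finset.sum_range_succ,
        Finset.sum_range_succ']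
      have e1 : ∀ i, k + 2 - (i + 1) = k + 1 - i := fun i => by omega
      simp only [e1, Nat.sub_self, Nat.sub_zero]
      ring
    -- recursion on interior points
    have hrec' : ∀ i ∈ Finset.range (k + 1),
        x (i + 1) (k + 1 - i) = A₁ *ᵥ (x i (k + 1 - i)) + A₂ *ᵥ (x (i + 1) (k - i)) := by
      intro i hi
      have hik : i ≤ k := Nat.lt_succ_iff.1 (Finset.mem_range.1 hi)
      have h1 : k + 1 - i = (k - i) + 1 := by omega
      rw [h1]
      exact hrec i (k - i)
    have hterm : ∀ i ∈ Finset.range (k + 1), Qf (x (i + 1) (k + 1 - i)) ≤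
        q1 (x i (k + 1 - i)) + q2 (x (i + 1) (k - i))
          - δ * (Nf (x i (k + 1 - i)) + Nf (x (i + 1) (k - i))) := by
      intro i hi
      rw [hrec' i hi]
      linarith [hpw (x i (k + 1 - i)) (x (i + 1) (k - i))]
    have hsum2 : ∑ i ∈ Finset.range (k + 1), Qf (x (i + 1) (k + 1 - i)) ≤
        (∑ i ∈ Finset.range (k + 1), q1 (x i (k + 1 - i)))
        + (∑ i ∈ Finset.range (k + 1), q2 (x (i + 1) (k - i)))
        - ∑ i ∈ Finset.range (k + 1),
            δ * (Nf (x i (k + 1 - i)) + Nf (x (i + 1) (k - i))) := by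
      have := Finset.sum_le_sum hterm
      simpa [Finset.sum_sub_distrib, Finset.sum_add_distrib] using this
    have ha : (∑ i ∈ Finset.range (k + 1), q1 (x i (k + 1 - i)))
        + (∑ i ∈ Finset.range (k + 1), q2 (x (i + 1) (k - i))) ≤ E (k + 1) := by
      have e1 : E (k + 1) = (∑ p ∈ Finset.range (k + 2), q1 (x p (k + 1 - p)))
          + (∑ p ∈ Finset.range (k + 2), q2 (x p (k + 1 - p))) := by
        rw [hEd]
        simp only
        rw [← Finset.sum_add_distrib]
        exact Finset.sum_congr rfl fun p _ => hQsplit _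
      have e2 : ∀ i : ℕ, k + 1 - (i + 1) = k - i := fun i => by omega
      have e5 : ∑ p ∈ Finset.range (k + 2), q1 (x p (k + 1 - p))
          = (∑ i ∈ Finset.range (k + 1), q1 (x i (k + 1 - i))) + q1 (x (k + 1) 0) := by
        rw [Finset.sum_range_succ]
        simp
      have e6 : ∑ p ∈ Finset.range (k + 2), q2 (x p (k + 1 - p))
          = q2 (x 0 (k + 1)) + ∑ i ∈ Finset.range (k + 1), q2 (x (i + 1) (k - i)) := by
        rw [Finset.sum_range_succ']
        simp only [e2, Nat.sub_zero]
        ring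
      rw [e1, e5, e6]
      have n1 : 0 ≤ q1 (x (k + 1) 0) := hq1nn _
      have n2 : 0 ≤ q2 (x 0 (k + 1)) := hq2nn _
      linarith
    have hb : NS (k + 1) ≤ ∑ i ∈ Finset.range (k + 1),
        (Nf (x i (k + 1 - i)) + Nf (x (i + 1) (k - i))) := by
      have e1 : NS (k + 1) = (∑ i ∈ Finset.range (k + 1), Nf (x i (k + 1 - i)))
          + Nf (x (k + 1) 0) := by
        rw [hNSd]
        simp only
        rw [Finset.sum_range_succ]
        simp
      have e3 : Nf (x (k + 1) 0) ≤ ∑ i ∈ Finset.range (k + 1), Nf (x (i + 1) (k - i)) := by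
        have hm : k ∈ Finset.range (k + 1) := Finset.mem_range.2 (Nat.lt_succ_self k)
        have := Finset.single_le_sum (f := fun i => Nf (x (i + 1) (k - i)))
          (fun i _ => hNnn _) hm
        simpa using this
      rw [Finset.sum_add_distrib]
      linarith
    have hδNS : δ * NS (k + 1) ≤ ∑ i ∈ Finset.range (k + 1),
        δ * (Nf (x i (k + 1 - i)) + Nf (x (i + 1) (k - i))) := by
      rw [← Finset.mul_sum]
      exact mul_le_mul_of_nonneg_left hb hδ.le
    rw [hsplit]
    linarith
  -- boundary support bound
  obtain ⟨K₁, hK₁⟩ := hbd1.bddAbove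
  obtain ⟨K₂, hK₂⟩ := hbd2.bddAbove
  set K : ℕ := max K₁ K₂ + 1 with hKdef
  have hxb1 : ∀ m, K ≤ m → x m 0 = 0 := by
    intro m hm
    by_contra h
    have : m ≤ K₁ := hK₁ h
    omega
  have hxb2 : ∀ m, K ≤ m → x 0 m = 0 := by
    intro m hm
    by_contra h
    have : m ≤ K₂ := hK₂ h
    omega
  set r : ℝ := 1 - δ / lam with hrdef
  have hr0 : 0 ≤ r := by
    have : δ / lam ≤ 1 := (div_le_one hlam).2 hδlam
    simp only [hrdef]
    linarith
  have hr1 : r < 1 := by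
    have : 0 < δ / lam := div_pos hδ hlam
    simp only [hrdef]
    linarith
  have hdec : ∀ m, K ≤ m → E (m + 1) ≤ r * E m := by
    intro m hm
    have hK1 : 1 ≤ K := by omega
    obtain ⟨k, rfl⟩ : ∃ k, m = k + 1 := ⟨m - 1, by omega⟩
    have h1 := hstep k
    have hb1 : x (k + 2) 0 = 0 := hxb1 (k + 2) (by omega)
    have hb2 : x 0 (k + 2) = 0 := hxb2 (k + 2) (by omega)
    rw [hb1, hb2] at h1
    have hQ0 : Qf (0 : Fin n → ℝ) = 0 := by simp [hQd]
    rw [hQ0] at h1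
    have h2 : (δ / lam) * E (k + 1) ≤ δ * NS (k + 1) := by
      have h3 := mul_le_mul_of_nonneg_left (hElam (k + 1)) (le_of_lt (div_pos hδ hlam))
      rw [show δ / lam * (lam * NS (k + 1)) = δ * NS (k + 1) from by field_simp] at h3
      exact h3
    have e4 : r * E (k + 1) = E (k + 1) - δ / lam * E (k + 1) := by rw [hrdef]; ring
    rw [show k + 1 + 1 = k + 2 from rfl, e4]
    linarith
  have hiter : ∀ t, E (K + t) ≤ r ^ t * E K := by
    intro t
    induction t with
    | zero => simp
    | succ t ih =>
      have h1 : E (K + t + 1) ≤ r * E (K + t) := hdec (K + t) (by omega)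
      have h2 : r * E (K + t) ≤ r * (r ^ t * E K) := mul_le_mul_of_nonneg_left ih hr0
      calc E (K + (t + 1)) = E (K + t + 1) := rfl
        _ ≤ r * (r ^ t * E K) := le_trans h1 h2
        _ = r ^ (t + 1) * E K := by ring
  -- conclusion
  intro ε hε
  have hEK1 : (0 : ℝ) < E K + 1 := by linarith [hEnn K]
  have hcpos : 0 < μ * ε ^ 2 / (E K + 1) := by positivity
  obtain ⟨t₀, ht₀⟩ := exists_pow_lt_of_lt_one hcpos hr1
  refine ⟨K + t₀, fun i j hij => ?_⟩
  obtain ⟨t, ht⟩ : ∃ t, i + j = K + t := ⟨i + j - K, by omega⟩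
  have htt : t₀ ≤ t := by omega
  have h1 : E (K + t) ≤ r ^ t * E K := hiter t
  have h2 : r ^ t ≤ r ^ t₀ := pow_le_pow_of_le_one hr0 hr1.le htt
  have h3 : r ^ t * E K ≤ r ^ t₀ * E K := mul_le_mul_of_nonneg_right h2 (hEnn K)
  have h4 : r ^ t₀ * E K < μ * ε ^ 2 := by
    have h5 := mul_lt_mul_of_pos_right ht₀ hEK1
    rw [div_mul_cancel₀ _ (ne_of_gt hEK1)] at h5
    nlinarith [hEnn K, pow_nonneg hr0 t₀]
  have hEm : E (K + t) < μ * ε ^ 2 := lt_of_le_of_lt (le_trans h1 h3) h4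
  have hQx : Qf (x i j) ≤ E (K + t) := ht ▸ hQleE i j
  have hNx : μ * Nf (x i j) ≤ Qf (x i j) := by
    have h6 := hlowR₁ (x i j)
    have h7 := hq2nn (x i j)
    rw [hQsplit]
    simp only [hNd, hq1d, hq2d] at *
    linarith
  have hNlt : Nf (x i j) < ε ^ 2 := by
    have h8 : μ * Nf (x i j) < μ * ε ^ 2 :=
      lt_of_le_of_lt hNx (lt_of_le_of_lt hQx hEm)
    exact (mul_lt_mul_iff_right₀ hμ).1 h8
  have hnorm : ‖x i j‖ ≤ Real.sqrt (Nf (x i j)) := by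
    refine pi_norm_le_iff_of_nonneg (Real.sqrt_nonneg _) |>.2 fun l => ?_
    have h9 : x i j l * x i j l ≤ Nf (x i j) := by
      simp only [hNd, dotProduct]
      exact Finset.single_le_sum (f := fun p => x i j p * x i j p)
        (fun p _ => mul_self_nonneg _) (Finset.mem_univ l)
    have h10 : ‖x i j l‖ = Real.sqrt (x i j l * x i j l) := by
      rw [Real.sqrt_mul_self_eq_abs, Real.norm_eq_abs]
    rw [h10]
    exact Real.sqrt_le_sqrt h9
  refine lt_of_le_of_lt hnorm ?_
  have h11 := Real.sqrt_lt_sqrt (hNnn _) hNlt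
  rwa [Real.sqrt_sq hε.le] at h11
end

section
/- (Elimination/projection lemma instance) Let Φ ∈ ℝ^{m×m} be symmetric, P ∈ ℝ^{p×m}, Q ∈ ℝ^{q×m}. There exists Λ ∈ ℝ^{q×p} with Φ + PᵀΛᵀQ + QᵀΛP < 0 if and only if W_Pᵀ Φ W_P < 0 and W_Qᵀ Φ W_Q < 0, where the columns of W_P and W_Q form bases of ker P and ker Q respectively. -/
open Matrix

noncomputable section
namespace Stmt17

attribute [local instance] Matrix.normedAddCommGroup Matrix.normedSpace

variable {m : ℕ}

attribute [local instance] Matrix.normedAddCommGroup Matrix.normedSpace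

variable {m : ℕ}


lemma quad_continuous (M : Matrix (Fin m) (Fin m) ℝ) :
    Continuous fun x : Fin m → ℝ => x ⬝ᵥ M.mulVec x := by
  simp only [dotProduct, Matrix.mulVec]
  exact continuous_finset_sum _ fun i _ =>
    (continuous_apply i).mul (continuous_finset_sum _ fun j _ =>
      continuous_const.mul (continuous_apply j))

lemma dot_self_pos {x : Fin m → ℝ} (hx : x ≠ 0) : 0 < x ⬝ᵥ x := by
  obtain ⟨i, hi⟩ : ∃ i, x i ≠ 0 := by
    by_contra h; push_neg at h; exact hx (funext fun i => h i)
  have hii : (0:ℝ) < x i * x i := mul_self_pos.mpr hi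
  exact Finset.sum_pos' (fun j _ => mul_self_nonneg (x j)) ⟨i, Finset.mem_univ i, hii⟩

lemma sOpen : IsOpen {M : Matrix (Fin m) (Fin m) ℝ | ∀ x : Fin m → ℝ, x ≠ 0 → x ⬝ᵥ M.mulVec x < 0} := by
  by_cases hm : ∃ x : Fin m → ℝ, x ≠ 0
  · obtain ⟨x₀, hx₀⟩ := hm
    refine Metric.isOpen_iff.mpr ?_
    intro M hM
    have hsph : (Metric.sphere (0 : Fin m → ℝ) 1).Nonempty := by
      refine ⟨‖x₀‖⁻¹ • x₀, ?_⟩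
      simp [norm_smul, inv_mul_cancel₀ (norm_ne_zero_iff.mpr hx₀)]
    obtain ⟨z, hz, hzmax⟩ := (isCompact_sphere (0 : Fin m → ℝ) 1).exists_isMaxOn hsph
      (quad_continuous M).continuousOn
    have hz1 : ‖z‖ = 1 := by simpa using hz
    have hzne : z ≠ 0 := by
      intro h; rw [h] at hz1; simp at hz1
    have hδpos : 0 < -(z ⬝ᵥ M.mulVec z) := neg_pos.mpr (hM z hzne)
    set δ := -(z ⬝ᵥ M.mulVec z) with hδ
    refine ⟨δ / ((m:ℝ)^2 + 1), by positivity, ?_⟩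
    intro N hN
    have hdist : dist N M < δ / ((m:ℝ)^2 + 1) := by rwa [Metric.mem_ball] at hN
    intro x hx
    have hc : 0 < ‖x‖ := norm_pos_iff.mpr hx
    have hy : (‖x‖⁻¹ • x) ∈ Metric.sphere (0 : Fin m → ℝ) 1 := by
      simp [norm_smul, inv_mul_cancel₀ hc.ne']
    have h1 : (‖x‖⁻¹ • x) ⬝ᵥ M.mulVec (‖x‖⁻¹ • x) ≤ -δ := by
      have := hzmax hy
      simpa [hδ] using this
    have hqM : x ⬝ᵥ M.mulVec x ≤ -δ * ‖x‖^2 := by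
      have hxx : x = ‖x‖ • (‖x‖⁻¹ • x) := by
        rw [smul_smul, mul_inv_cancel₀ hc.ne', one_smul]
      calc x ⬝ᵥ M.mulVec x
          = ‖x‖^2 * ((‖x‖⁻¹ • x) ⬝ᵥ M.mulVec (‖x‖⁻¹ • x)) := by
            conv_lhs => rw [hxx]
            rw [Matrix.mulVec_smul, smul_dotProduct, dotProduct_smul]
            simp [smul_eq_mul]; ring
        _ ≤ ‖x‖^2 * (-δ) := by
            apply mul_le_mul_of_nonneg_left h1 (by positivity)
        _ = -δ * ‖x‖^2 := by ring
    have hxb : ∀ i, |x i| ≤ ‖x‖ := fun i => by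
      simpa using norm_le_pi_norm x i
    have hΔ : ∀ i j, |(N - M) i j| ≤ dist N M := by
      intro i j
      have h := Matrix.norm_entry_le_entrywise_sup_norm (N - M) (i := i) (j := j)
      rwa [dist_eq_norm, Real.norm_eq_abs] at *
    have key : ∀ i j, x i * ((N - M) i j * x j) ≤ ‖x‖ * (dist N M * ‖x‖) := by
      intro i j
      calc x i * ((N - M) i j * x j) ≤ |x i * ((N - M) i j * x j)| := le_abs_self _
        _ = |x i| * (|(N - M) i j| * |x j|) := by rw [abs_mul, abs_mul]
        _ ≤ ‖x‖ * (dist N M * ‖x‖) := by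
            refine mul_le_mul (hxb i) ?_ (by positivity) (norm_nonneg x)
            exact mul_le_mul (hΔ i j) (hxb j) (abs_nonneg _) dist_nonneg
    have hpert : x ⬝ᵥ (N - M).mulVec x ≤ (m:ℝ)^2 * (dist N M * ‖x‖^2) := by
      simp only [dotProduct, Matrix.mulVec]
      calc ∑ i, x i * ∑ j, (N - M) i j * x j
          = ∑ i, ∑ j, x i * ((N - M) i j * x j) := by simp [Finset.mul_sum]
        _ ≤ ∑ _i : Fin m, ∑ _j : Fin m, ‖x‖ * (dist N M * ‖x‖) :=
            Finset.sum_le_sum fun i _ => Finset.sum_le_sum fun j _ => key i j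
        _ = (m:ℝ) * ((m:ℝ) * (‖x‖ * (dist N M * ‖x‖))) := by
            simp [Finset.sum_const, Finset.card_univ, nsmul_eq_mul, mul_assoc]
        _ = (m:ℝ)^2 * (dist N M * ‖x‖^2) := by ring
    have hsplit : x ⬝ᵥ N.mulVec x = x ⬝ᵥ M.mulVec x + x ⬝ᵥ (N - M).mulVec x := by
      rw [Matrix.sub_mulVec, dotProduct_sub]; ring
    have hd2 : (m:ℝ)^2 * dist N M < δ := by
      have h0 : (0:ℝ) ≤ dist N M := dist_nonneg
      have h3 : dist N M * ((m:ℝ)^2+1) < δ := (lt_div_iff₀ (by positivity)).mp hdist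
      nlinarith
    nlinarith [mul_pos hc hc, sq_nonneg ‖x‖]
  · push_neg at hm
    have : {M : Matrix (Fin m) (Fin m) ℝ | ∀ x : Fin m → ℝ, x ≠ 0 → x ⬝ᵥ M.mulVec x < 0}
        = Set.univ := Set.eq_univ_of_forall fun M x hx => absurd (hm x) hx
    rw [this]; exact isOpen_univ




lemma trace_stdBasisMatrix_mul {a b : ℕ} (C : Matrix (Fin b) (Fin a) ℝ) (i : Fin a) (j : Fin b) :
    trace ((Matrix.single i j (1:ℝ)) * C) = C j i := by
  simp only [Matrix.trace, Matrix.diag, Matrix.mul_apply, Matrix.single,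
    Matrix.of_apply, ite_mul, one_mul, zero_mul]
  rw [Finset.sum_comm]
  simp [Finset.sum_ite_eq, Finset.sum_ite_eq', ite_and]

lemma repr_trace (f : Matrix (Fin m) (Fin m) ℝ →L[ℝ] ℝ) (M : Matrix (Fin m) (Fin m) ℝ) :
    f M = trace (Mᵀ * Matrix.of (fun i j => f (Matrix.single i j 1))) := by
  have h1 : ∀ (i j : Fin m), (Matrix.single i j (M i j) : Matrix _ _ ℝ)
      = M i j • Matrix.single i j 1 := by
    intro i j; rw [Matrix.smul_single, smul_eq_mul, mul_one]
  have key : f M = ∑ i, ∑ j, M i j * f (Matrix.single i j 1) := by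
    conv_lhs => rw [matrix_eq_sum_single M]
    rw [map_sum]
    refine Finset.sum_congr rfl fun i _ => ?_
    rw [map_sum]
    refine Finset.sum_congr rfl fun j _ => ?_
    rw [h1 i j, _root_.map_smul, smul_eq_mul]
  rw [key]
  simp only [Matrix.trace, Matrix.diag, Matrix.mul_apply, Matrix.transpose_apply,
    Matrix.of_apply]
  rw [Finset.sum_comm]

lemma trace_factor (Φ : Matrix (Fin m) (Fin m) ℝ) {k : ℕ} (A : Matrix (Fin m) (Fin k) ℝ) :
    trace (Φ * (A * Aᵀ)) = ∑ j : Fin k, (Aᵀ j) ⬝ᵥ Φ.mulVec (Aᵀ j) := by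
  calc trace (Φ * (A * Aᵀ))
      = ∑ i, ∑ kk, ∑ j, Φ i kk * (A kk j * A i j) := by
        simp only [Matrix.trace, Matrix.diag, Matrix.mul_apply, Matrix.transpose_apply,
          Finset.mul_sum]
    _ = ∑ i, ∑ j, ∑ kk, Φ i kk * (A kk j * A i j) :=
        Finset.sum_congr rfl fun i _ => Finset.sum_comm
    _ = ∑ j, ∑ i, ∑ kk, Φ i kk * (A kk j * A i j) := Finset.sum_comm
    _ = ∑ j, (Aᵀ j) ⬝ᵥ Φ.mulVec (Aᵀ j) := by
        refine Finset.sum_congr rfl fun j _ => ?_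
        simp only [dotProduct, Matrix.mulVec, Matrix.transpose_apply, Finset.mul_sum]
        refine Finset.sum_congr rfl fun i _ => ?_
        refine Finset.sum_congr rfl fun kk _ => ?_
        ring

lemma trace_nonpos_aux {r : ℕ} (Φ : Matrix (Fin m) (Fin m) ℝ) (P : Matrix (Fin r) (Fin m) ℝ)
    (h : ∀ x : Fin m → ℝ, x ≠ 0 → P.mulVec x = 0 → x ⬝ᵥ Φ.mulVec x < 0)
    {k : ℕ} (A : Matrix (Fin m) (Fin k) ℝ) (hPA : P * A = 0) :
    trace (Φ * (A * Aᵀ)) ≤ 0 ∧ (A ≠ 0 → trace (Φ * (A * Aᵀ)) < 0) := by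
  have hker : ∀ j, P.mulVec (Aᵀ j) = 0 := by
    intro j; funext i
    have h0 : (P * A) i j = 0 := by rw [hPA]; rfl
    simpa [Matrix.mulVec, dotProduct, Matrix.mul_apply, Matrix.transpose_apply] using h0
  have hterm : ∀ j, (Aᵀ j) ⬝ᵥ Φ.mulVec (Aᵀ j) ≤ 0 := by
    intro j
    by_cases hj : Aᵀ j = 0
    · simp [hj]
    · exact (h _ hj (hker j)).le
  rw [trace_factor]
  constructor
  · exact Finset.sum_nonpos fun j _ => hterm j
  · intro hA
    obtain ⟨i, j, hij⟩ : ∃ i j, A i j ≠ 0 := by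
      by_contra hc; push_neg at hc
      exact hA (by ext i j; simpa using hc i j)
    have hcol : Aᵀ j ≠ 0 := by
      intro hz; exact hij (by simpa using congrFun hz i)
    have hlt := h _ hcol (hker j)
    calc ∑ j' : Fin k, (Aᵀ j') ⬝ᵥ Φ.mulVec (Aᵀ j')
        < ∑ _j' : Fin k, (0:ℝ) := by
          refine Finset.sum_lt_sum (fun j' _ => hterm j') ⟨j, Finset.mem_univ j, hlt⟩
      _ = 0 := by simp




lemma mulVec_ext {a b : ℕ} {A B : Matrix (Fin a) (Fin b) ℝ}
    (h : ∀ v, A *ᵥ v = B *ᵥ v) : A = B := by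
  ext i j
  have h2 := congrFun (h (Pi.single j 1)) i
  simpa [Matrix.mulVec_single] using h2

open scoped MatrixOrder in
lemma decompose (S : Matrix (Fin m) (Fin m) ℝ) (hS : S.PosSemidef)
    {pp qq : ℕ} (P : Matrix (Fin pp) (Fin m) ℝ) (Q : Matrix (Fin qq) (Fin m) ℝ)
    (hPSQ : P * S * Qᵀ = 0) :
    ∃ A1 A2 : Matrix (Fin m) (Fin m) ℝ,
      A1 * A1ᵀ + A2 * A2ᵀ = S ∧ P * A1 = 0 ∧ Q * A2 = 0 := by
  set Y := CFC.sqrt S with hYdef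
  have hYY : Y * Y = S := CFC.sqrt_mul_sqrt_self S hS.nonneg
  have hYsymm : Yᵀ = Y := by
    have h := (CFC.sqrt_nonneg S).posSemidef.1
    rwa [Matrix.IsHermitian, Matrix.conjTranspose_eq_transpose_of_trivial] at h
  set K : Submodule ℝ (EuclideanSpace ℝ (Fin m)) :=
    LinearMap.range (Matrix.toEuclideanLin (Y * Qᵀ)) with hK
  set prj : EuclideanSpace ℝ (Fin m) →ₗ[ℝ] EuclideanSpace ℝ (Fin m) :=
    K.subtype ∘ₗ K.orthogonalProjectionOnto.toLinearMap with hprj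
  set Pi' : Matrix (Fin m) (Fin m) ℝ := Matrix.toEuclideanLin.symm prj with hPidef
  have hPi : Matrix.toEuclideanLin Pi' = prj := Matrix.toEuclideanLin.apply_symm_apply prj
  have hPimul : ∀ v : Fin m → ℝ,
      Pi' *ᵥ v = WithLp.equiv 2 _ (prj ((WithLp.equiv 2 (Fin m → ℝ)).symm v)) := by
    intro v
    rw [← hPi]
    rfl
  have hrangeP : ∀ w : EuclideanSpace ℝ (Fin m), w ∈ K →
      (P * Y) *ᵥ (WithLp.equiv 2 _ w) = 0 := by
    rintro w ⟨z, rfl⟩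
    have h1 : WithLp.equiv 2 _ (Matrix.toEuclideanLin (Y * Qᵀ) z)
        = (Y * Qᵀ) *ᵥ (WithLp.equiv 2 _ z) := rfl
    rw [h1, Matrix.mulVec_mulVec]
    have hzero : P * Y * (Y * Qᵀ) = 0 := by
      rw [show P * Y * (Y * Qᵀ) = P * (Y * Y) * Qᵀ by
        rw [← Matrix.mul_assoc, Matrix.mul_assoc P Y Y], hYY, hPSQ]
    rw [hzero, Matrix.zero_mulVec]
  have hprjmem : ∀ x : EuclideanSpace ℝ (Fin m), prj x ∈ K := by
    intro x
    simpa [hprj] using SetLike.coe_mem (K.orthogonalProjectionOnto x)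
  have hG1 : P * Y * Pi' = 0 := by
    apply mulVec_ext; intro v
    rw [← Matrix.mulVec_mulVec, hPimul, Matrix.zero_mulVec]
    exact hrangeP _ (hprjmem _)
  have hQY : Q * Y = (Y * Qᵀ)ᵀ := by
    rw [Matrix.transpose_mul, Matrix.transpose_transpose, hYsymm]
  have horthQ : ∀ w : EuclideanSpace ℝ (Fin m), w ∈ Kᗮ →
      (Q * Y) *ᵥ (WithLp.equiv 2 _ w) = 0 := by
    intro w hw
    funext j
    have hcmem : Matrix.toEuclideanLin (Y * Qᵀ)
        ((WithLp.equiv 2 (Fin qq → ℝ)).symm (Pi.single j 1)) ∈ K :=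
      LinearMap.mem_range_self _ _
    have hinner := (Submodule.mem_orthogonal K w).mp hw _ hcmem
    rw [EuclideanSpace.inner_eq_star_dotProduct] at hinner
    have hc : (Matrix.toEuclideanLin (Y * Qᵀ)
        ((WithLp.equiv 2 (Fin qq → ℝ)).symm (Pi.single j 1))).ofLp
        = (Y * Qᵀ) *ᵥ (Pi.single j 1) := rfl
    rw [hc] at hinner
    have hstar : star ((Y * Qᵀ) *ᵥ (Pi.single j (1:ℝ))) = (Y * Qᵀ) *ᵥ (Pi.single j 1) :=
      star_trivial _
    rw [hstar] at hinner
    have hgoal : ((Q * Y) *ᵥ (WithLp.equiv 2 _ w)) j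
        = ((Y * Qᵀ) *ᵥ (Pi.single j 1)) ⬝ᵥ (WithLp.equiv 2 _ w) := by
      rw [hQY, Matrix.mulVec_single]
      simp [Matrix.mulVec, dotProduct, Matrix.transpose_apply]
    have hz : ((Q * Y) *ᵥ (WithLp.equiv 2 _ w)) j = 0 := by rw [hgoal, dotProduct_comm]; exact hinner
    simpa using hz
  have hG2 : Q * Y * Pi' = Q * Y := by
    apply mulVec_ext; intro v
    rw [← Matrix.mulVec_mulVec, hPimul]
    set x := (WithLp.equiv 2 (Fin m → ℝ)).symm v with hx
    have hsub : x - prj x ∈ Kᗮ := by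
      simpa [hprj] using K.sub_starProjection_mem_orthogonal x
    have h0 := horthQ _ hsub
    rw [show WithLp.equiv 2 (Fin m → ℝ) (x - prj x) = WithLp.equiv 2 _ x - WithLp.equiv 2 _ (prj x) from rfl, Matrix.mulVec_sub] at h0
    have hxv : WithLp.equiv 2 (Fin m → ℝ) x = v := (WithLp.equiv 2 _).apply_symm_apply v
    rw [hxv] at h0
    exact (sub_eq_zero.mp h0).symm
  have hval : ∀ (x : EuclideanSpace ℝ (Fin m)) (i : Fin m),
      (WithLp.equiv 2 (Fin m → ℝ) x) i = (inner ℝ (EuclideanSpace.single i (1:ℝ)) x : ℝ) := by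
    intro x i
    rw [EuclideanSpace.inner_single_left]
    simp
  have hselfadj : ∀ a b : EuclideanSpace ℝ (Fin m),
      (inner ℝ (prj a) b : ℝ) = inner ℝ a (prj b) := by
    intro a b
    simpa [hprj] using Submodule.inner_starProjection_left_eq_right K a b
  have e1 : ∀ (i j : Fin m), Pi' i j
      = (inner ℝ (EuclideanSpace.single i (1:ℝ)) (prj (EuclideanSpace.single j 1)) : ℝ) := by
    intro i j
    have h2 := congrFun (hPimul (Pi.single j 1)) i
    rw [show (WithLp.equiv 2 (Fin m → ℝ)).symm (Pi.single j 1) = EuclideanSpace.single j (1:ℝ) from rfl] at h2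
    rw [← hval]
    rw [← h2]
    simp [Matrix.mulVec_single]
  have hG3 : Pi'ᵀ = Pi' := by
    ext i j
    rw [Matrix.transpose_apply]
    calc Pi' j i
        = (inner ℝ (EuclideanSpace.single j (1:ℝ)) (prj (EuclideanSpace.single i 1)) : ℝ) := e1 j i
      _ = (inner ℝ (prj (EuclideanSpace.single j (1:ℝ))) (EuclideanSpace.single i 1) : ℝ) :=
          (hselfadj _ _).symm
      _ = (inner ℝ (EuclideanSpace.single i (1:ℝ)) (prj (EuclideanSpace.single j 1)) : ℝ) :=
          real_inner_comm _ _
      _ = Pi' i j := (e1 i j).symm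
  have hprjidem : ∀ x, prj (prj x) = prj x := by
    intro x
    have h5 : K.orthogonalProjectionOnto ((K.orthogonalProjectionOnto x : EuclideanSpace ℝ (Fin m)))
        = K.orthogonalProjectionOnto x := Submodule.orthogonalProjectionOnto_mem_subspace_eq_self _
    simp only [hprj, LinearMap.comp_apply, Submodule.subtype_apply,
      ContinuousLinearMap.coe_coe]
    rw [h5]
  have hG4 : Pi' * Pi' = Pi' := by
    apply mulVec_ext; intro v
    conv_lhs => rw [← Matrix.mulVec_mulVec, hPimul, hPimul,
      (WithLp.equiv 2 (Fin m → ℝ)).symm_apply_apply, hprjidem]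
    rw [hPimul]
  refine ⟨Y * Pi', Y - Y * Pi', ?_, ?_, ?_⟩
  · have ht1 : (Y * Pi')ᵀ = Pi' * Y := by rw [Matrix.transpose_mul, hG3, hYsymm]
    have ht2 : (Y - Y * Pi')ᵀ = Y - Pi' * Y := by
      rw [Matrix.transpose_sub, ht1, hYsymm]
    rw [ht1, ht2]
    have e5 : Y * Pi' * (Pi' * Y) = Y * Pi' * Y := by
      rw [← Matrix.mul_assoc, Matrix.mul_assoc Y Pi' Pi', hG4]
    have e6 : (Y - Y * Pi') * (Y - Pi' * Y) = Y * Y - Y * Pi' * Y := by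
      rw [Matrix.sub_mul, Matrix.mul_sub, Matrix.mul_sub, e5, ← Matrix.mul_assoc Y Pi' Y]
      abel
    rw [e5, e6, hYY]
    abel
  · rw [← Matrix.mul_assoc, hG1]
  · rw [Matrix.mul_sub, ← Matrix.mul_assoc, hG2, sub_self]


end Stmt17

open Stmt17

/-- (Projection/elimination lemma) For symmetric Φ and matrices
P, Q, there exists Λ with Φ + PᵀΛᵀQ + QᵀΛP < 0 iff the quadratic form of Φ is
negative on ker P \ {0} and on ker Q \ {0}. -/
theorem stmt_17 (m p q : ℕ) (Φ : Matrix (Fin m) (Fin m) ℝ) (hΦ : Φ.IsSymm)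
    (P : Matrix (Fin p) (Fin m) ℝ) (Q : Matrix (Fin q) (Fin m) ℝ) :
    (∃ Λ : Matrix (Fin q) (Fin p) ℝ,
        (-(Φ + Pᵀ * Λᵀ * Q + Qᵀ * Λ * P)).PosDef) ↔
      ((∀ x : Fin m → ℝ, x ≠ 0 → P.mulVec x = 0 → x ⬝ᵥ Φ.mulVec x < 0) ∧
       (∀ x : Fin m → ℝ, x ≠ 0 → Q.mulVec x = 0 → x ⬝ᵥ Φ.mulVec x < 0)) := by
  have hΦe : Φᵀ = Φ := hΦ
  constructor
  · rintro ⟨Λ, hΛ⟩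
    have hq := (Matrix.posDef_iff_dotProduct_mulVec.mp hΛ).2
    constructor
    · intro x hx hPx
      have h2 := hq hx
      simp only [star_trivial] at h2
      rw [Matrix.neg_mulVec, dotProduct_neg, Matrix.add_mulVec, Matrix.add_mulVec,
        dotProduct_add, dotProduct_add] at h2
      have e1 : x ⬝ᵥ (Pᵀ * Λᵀ * Q) *ᵥ x = 0 := by
        rw [Matrix.dotProduct_mulVec, Matrix.mul_assoc, ← Matrix.vecMul_vecMul,
          Matrix.vecMul_transpose, hPx, Matrix.zero_vecMul, zero_dotProduct]
      have e2 : x ⬝ᵥ (Qᵀ * Λ * P) *ᵥ x = 0 := by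
        rw [← Matrix.mulVec_mulVec, hPx, Matrix.mulVec_zero, dotProduct_zero]
      rw [e1, e2] at h2
      linarith
    · intro x hx hQx
      have h2 := hq hx
      simp only [star_trivial] at h2
      rw [Matrix.neg_mulVec, dotProduct_neg, Matrix.add_mulVec, Matrix.add_mulVec,
        dotProduct_add, dotProduct_add] at h2
      have e1 : x ⬝ᵥ (Pᵀ * Λᵀ * Q) *ᵥ x = 0 := by
        rw [← Matrix.mulVec_mulVec, hQx, Matrix.mulVec_zero, dotProduct_zero]
      have e2 : x ⬝ᵥ (Qᵀ * Λ * P) *ᵥ x = 0 := by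
        rw [Matrix.dotProduct_mulVec, Matrix.mul_assoc, ← Matrix.vecMul_vecMul,
          Matrix.vecMul_transpose, hQx, Matrix.zero_vecMul, zero_dotProduct]
      rw [e1, e2] at h2
      linarith
  · rintro ⟨hker1, hker2⟩
    by_contra hne
    push_neg at hne
    set s : Set (Matrix (Fin m) (Fin m) ℝ) :=
      {M | ∀ x : Fin m → ℝ, x ≠ 0 → x ⬝ᵥ M.mulVec x < 0} with hs
    set t : Set (Matrix (Fin m) (Fin m) ℝ) :=
      Set.range (fun Λ : Matrix (Fin q) (Fin p) ℝ => Φ + Pᵀ * Λᵀ * Q + Qᵀ * Λ * P) with ht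
    have hsconv : Convex ℝ s := by
      intro M hM N hN a b ha hb hab
      intro x hx
      have h1 := hM x hx
      have h2 := hN x hx
      have hq : x ⬝ᵥ (a • M + b • N).mulVec x
          = a * (x ⬝ᵥ M.mulVec x) + b * (x ⬝ᵥ N.mulVec x) := by
        rw [Matrix.add_mulVec, dotProduct_add, Matrix.smul_mulVec,
          Matrix.smul_mulVec, dotProduct_smul, dotProduct_smul,
          smul_eq_mul, smul_eq_mul]
      show x ⬝ᵥ (a • M + b • N).mulVec x < 0
      rw [hq]
      rcases lt_or_eq_of_le ha with h0 | h0
      · have hlt : a * (x ⬝ᵥ M.mulVec x) < 0 := mul_neg_of_pos_of_neg h0 h1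
        have hle : b * (x ⬝ᵥ N.mulVec x) ≤ 0 := mul_nonpos_of_nonneg_of_nonpos hb h2.le
        linarith
      · have hb1 : b = 1 := by linarith
        rw [← h0, hb1]
        simpa using h2
    have hsopen : IsOpen s := sOpen
    have htconv : Convex ℝ t := by
      rintro M1 ⟨Λ1, rfl⟩ M2 ⟨Λ2, rfl⟩ a b ha hb hab
      refine ⟨a • Λ1 + b • Λ2, ?_⟩
      have hΦ' : a • Φ + b • Φ = Φ := by rw [← add_smul, hab, one_smul]
      simp only [Matrix.transpose_add, Matrix.transpose_smul, Matrix.mul_add, Matrix.add_mul,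
        Matrix.mul_smul, Matrix.smul_mul, smul_add]
      nth_rewrite 1 [← hΦ']
      abel
    have hdisj : Disjoint s t := by
      rw [Set.disjoint_left]
      rintro M hMs ⟨Λ, rfl⟩
      refine hne Λ (Matrix.posDef_iff_dotProduct_mulVec.mpr ⟨?_, ?_⟩)
      · rw [Matrix.IsHermitian, Matrix.conjTranspose_eq_transpose_of_trivial]
        simp only [Matrix.transpose_neg, Matrix.transpose_add, Matrix.transpose_mul,
          Matrix.transpose_transpose, hΦe, Matrix.mul_assoc]
        abel
      · intro x hx
        have hlt := hMs x hx
        simp only [star_trivial]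
        rw [Matrix.neg_mulVec, dotProduct_neg]
        linarith
    obtain ⟨f, u, hfs, hft⟩ := geometric_hahn_banach_open hsconv hsopen htconv hdisj
    set Z : Matrix (Fin m) (Fin m) ℝ := Matrix.of (fun i j => f (Matrix.single i j 1)) with hZ
    have hfZ : ∀ M, f M = trace (Mᵀ * Z) := fun M => repr_trace f M
    set S : Matrix (Fin m) (Fin m) ℝ := (2⁻¹ : ℝ) • (Z + Zᵀ) with hSdef
    have hSsymm : Sᵀ = S := by
      rw [hSdef, Matrix.transpose_smul, Matrix.transpose_add, Matrix.transpose_transpose,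
        add_comm]
    have hfsymm : ∀ M : Matrix (Fin m) (Fin m) ℝ, Mᵀ = M → f M = trace (M * S) := by
      intro M hM
      rw [hfZ M, hM, hSdef, Matrix.mul_smul, Matrix.trace_smul, Matrix.mul_add,
        Matrix.trace_add]
      have hzz : trace (M * Zᵀ) = trace (M * Z) := by
        rw [← Matrix.trace_transpose (M * Zᵀ), Matrix.transpose_mul,
          Matrix.transpose_transpose, hM, Matrix.trace_mul_comm]
      rw [hzz, smul_eq_mul]; ring
    have hscale : ∀ M ∈ s, ∀ c : ℝ, 0 < c → c * f M < u := by
      intro M hM c hc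
      have hmem : (c • M) ∈ s := by
        intro x hx
        show x ⬝ᵥ (c • M).mulVec x < 0
        rw [Matrix.smul_mulVec, dotProduct_smul, smul_eq_mul]
        exact mul_neg_of_pos_of_neg hc (hM x hx)
      have h3 := hfs _ hmem
      rwa [_root_.map_smul, smul_eq_mul] at h3
    have hcone : ∀ M ∈ s, f M ≤ 0 := by
      intro M hM
      by_contra hpos
      push_neg at hpos
      have h3 := hscale M hM ((|u| + 1) / f M) (by positivity)
      rw [div_mul_cancel₀ _ (ne_of_gt hpos)] at h3
      have := le_abs_self u
      linarith
    have hneg1mem : (-1 : Matrix (Fin m) (Fin m) ℝ) ∈ s := by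
      intro x hx
      show x ⬝ᵥ (-1 : Matrix (Fin m) (Fin m) ℝ).mulVec x < 0
      rw [Matrix.neg_mulVec, dotProduct_neg, Matrix.one_mulVec]
      exact neg_lt_zero.mpr (dot_self_pos hx)
    have hu0 : 0 ≤ u := by
      by_contra hu
      push_neg at hu
      have hf1 : f (-1) ≤ 0 := hcone _ hneg1mem
      rcases lt_or_eq_of_le hf1 with hlt | heq
      · set w : ℝ := f (-1) with hw
        have hwne : w ≠ 0 := ne_of_lt hlt
        have hcpos : 0 < u / (2 * w) := div_pos_of_neg_of_neg hu (by linarith)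
        have h3 := hscale _ hneg1mem _ hcpos
        have h4 : u / (2 * w) * w = u / 2 := by
          field_simp
        rw [h4] at h3
        linarith
      · have h3 := hscale _ hneg1mem 1 one_pos
        rw [one_mul, heq] at h3
        linarith
    have hcross0 : ∀ Λ : Matrix (Fin q) (Fin p) ℝ,
        f (Pᵀ * Λᵀ * Q + Qᵀ * Λ * P) = 0 := by
      intro Λ
      by_contra hΛ
      have hAll : ∀ c : ℝ, u ≤ f Φ + c * f (Pᵀ * Λᵀ * Q + Qᵀ * Λ * P) := by
        intro c
        have hmem : (Φ + Pᵀ * (c • Λ)ᵀ * Q + Qᵀ * (c • Λ) * P) ∈ t := ⟨c • Λ, rfl⟩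
        have h2 := hft _ hmem
        have hdist : Φ + Pᵀ * (c • Λ)ᵀ * Q + Qᵀ * (c • Λ) * P
            = Φ + c • (Pᵀ * Λᵀ * Q + Qᵀ * Λ * P) := by
          rw [Matrix.transpose_smul]
          simp only [Matrix.smul_mul, Matrix.mul_smul, smul_add]
          rw [add_assoc]
        rw [hdist, map_add, _root_.map_smul, smul_eq_mul] at h2
        exact h2
      have h3 := hAll ((u - f Φ - 1) / f (Pᵀ * Λᵀ * Q + Qᵀ * Λ * P))
      rw [div_mul_cancel₀ _ hΛ] at h3
      linarith
    have hPSQ : P * S * Qᵀ = 0 := by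
      ext a b
      rw [Matrix.zero_apply]
      have h0 := hcross0 (Matrix.single b a 1)
      have hsymm_cross :
          (Pᵀ * (Matrix.single b a (1:ℝ))ᵀ * Q + Qᵀ * Matrix.single b a (1:ℝ) * P)ᵀ
          = Pᵀ * (Matrix.single b a (1:ℝ))ᵀ * Q + Qᵀ * Matrix.single b a (1:ℝ) * P := by
        simp only [Matrix.transpose_add, Matrix.transpose_mul, Matrix.transpose_transpose]
        rw [← Matrix.mul_assoc, ← Matrix.mul_assoc]
        exact add_comm _ _
      have h1 := hfsymm _ hsymm_cross
      rw [h0] at h1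
      have t2 : trace (Qᵀ * Matrix.single b a (1:ℝ) * P * S)
          = trace (Matrix.single b a (1:ℝ) * (P * S * Qᵀ)) := by
        rw [show Qᵀ * Matrix.single b a (1:ℝ) * P * S
            = Qᵀ * (Matrix.single b a (1:ℝ) * (P * S)) by simp only [Matrix.mul_assoc],
          Matrix.trace_mul_comm,
          show Matrix.single b a (1:ℝ) * (P * S) * Qᵀ
            = Matrix.single b a (1:ℝ) * (P * S * Qᵀ) by simp only [Matrix.mul_assoc]]
      have t1 : trace (Pᵀ * (Matrix.single b a (1:ℝ))ᵀ * Q * S)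
          = trace (Qᵀ * Matrix.single b a (1:ℝ) * P * S) := by
        rw [← Matrix.trace_transpose (Pᵀ * (Matrix.single b a (1:ℝ))ᵀ * Q * S)]
        simp only [Matrix.transpose_mul, Matrix.transpose_transpose, hSsymm]
        rw [Matrix.trace_mul_comm]
        simp only [Matrix.mul_assoc]
      have hexp : trace ((Pᵀ * (Matrix.single b a (1:ℝ))ᵀ * Q
            + Qᵀ * Matrix.single b a (1:ℝ) * P) * S)
          = 2 * (P * S * Qᵀ) a b := by
        rw [Matrix.add_mul, Matrix.trace_add, t1, t2, trace_stdBasisMatrix_mul]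
        ring
      rw [hexp] at h1
      linarith
    have hSpsd : S.PosSemidef := by
      refine Matrix.posSemidef_iff_dotProduct_mulVec.mpr ⟨?_, ?_⟩
      · rw [Matrix.IsHermitian, Matrix.conjTranspose_eq_transpose_of_trivial, hSsymm]
      · intro x
        simp only [star_trivial]
        have hSZ : x ⬝ᵥ S *ᵥ x = x ⬝ᵥ Z *ᵥ x := by
          rw [hSdef, Matrix.smul_mulVec, dotProduct_smul, Matrix.add_mulVec,
            dotProduct_add]
          have hzz : x ⬝ᵥ Zᵀ *ᵥ x = x ⬝ᵥ Z *ᵥ x := by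
            rw [Matrix.dotProduct_mulVec, Matrix.vecMul_transpose, dotProduct_comm]
          rw [hzz, smul_eq_mul]; ring
        rw [hSZ]
        have hkey : ∀ ε : ℝ, 0 < ε → 0 ≤ x ⬝ᵥ Z *ᵥ x + ε * trace Z := by
          intro ε hε
          have hmem : (-(Matrix.vecMulVec x x) - ε • 1) ∈ s := by
            intro y hy
            show y ⬝ᵥ (-(Matrix.vecMulVec x x) - ε • 1).mulVec y < 0
            have hvv : (Matrix.vecMulVec x x) *ᵥ y = (x ⬝ᵥ y) • x := by
              funext i
              simp only [Matrix.mulVec, dotProduct, Matrix.vecMulVec_apply,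
                Pi.smul_apply, smul_eq_mul, Finset.sum_mul]
              refine Finset.sum_congr rfl fun j _ => ?_
              ring
            rw [Matrix.sub_mulVec, dotProduct_sub, Matrix.neg_mulVec,
              dotProduct_neg, hvv, dotProduct_smul, Matrix.smul_mulVec,
              Matrix.one_mulVec, dotProduct_smul]
            have h4 : y ⬝ᵥ x = x ⬝ᵥ y := dotProduct_comm _ _
            have h5 : 0 < y ⬝ᵥ y := dot_self_pos hy
            simp only [smul_eq_mul]
            rw [h4]
            nlinarith [mul_self_nonneg (x ⬝ᵥ y), mul_pos hε h5]
          have hle := hcone _ hmem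
          rw [map_sub, map_neg, _root_.map_smul, smul_eq_mul] at hle
          have hfvv : f (Matrix.vecMulVec x x) = x ⬝ᵥ Z *ᵥ x := by
            rw [hfZ]
            rw [show (Matrix.vecMulVec x x)ᵀ = Matrix.vecMulVec x x from by
              ext i j; simp [Matrix.vecMulVec_apply, mul_comm]]
            simp only [Matrix.trace, Matrix.diag, Matrix.mul_apply, Matrix.vecMulVec_apply,
              dotProduct, Matrix.mulVec, Finset.mul_sum]
            rw [Finset.sum_comm]
            refine Finset.sum_congr rfl fun k _ => ?_
            refine Finset.sum_congr rfl fun i _ => ?_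
            ring
          have hf1 : f (1 : Matrix (Fin m) (Fin m) ℝ) = trace Z := by
            rw [hfZ, Matrix.transpose_one, Matrix.one_mul]
          rw [hfvv, hf1] at hle
          linarith
        by_contra hneg2
        push_neg at hneg2
        rcases le_or_gt (trace Z) 0 with htr | htr
        · have := hkey 1 one_pos
          nlinarith
        · have hεpos : 0 < -(x ⬝ᵥ Z *ᵥ x) / (2 * trace Z) :=
            div_pos (by linarith) (by linarith)
          have h6 := hkey _ hεpos
          have h7 : -(x ⬝ᵥ Z *ᵥ x) / (2 * trace Z) * trace Z = -(x ⬝ᵥ Z *ᵥ x) / 2 := by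
            field_simp
          linarith
    obtain ⟨A1, A2, hsum, hPA1, hQA2⟩ := decompose S hSpsd P Q hPSQ
    have hc1 := trace_nonpos_aux Φ P hker1 A1 hPA1
    have hc2 := trace_nonpos_aux Φ Q hker2 A2 hQA2
    have hfΦ : f Φ = trace (Φ * S) := hfsymm Φ hΦe
    have htraceS : trace (Φ * S) = trace (Φ * (A1 * A1ᵀ)) + trace (Φ * (A2 * A2ᵀ)) := by
      rw [← hsum, Matrix.mul_add, Matrix.trace_add]
    have huΦ : u ≤ f Φ := hft Φ ⟨0, by simp⟩
    have hA1z : A1 = 0 := by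
      by_contra hA1
      have := hc1.2 hA1
      have h8 := hc2.1
      rw [hfΦ, htraceS] at huΦ
      linarith
    have hA2z : A2 = 0 := by
      by_contra hA2
      have := hc2.2 hA2
      have h8 := hc1.1
      rw [hfΦ, htraceS] at huΦ
      linarith
    have hS0 : S = 0 := by
      rw [← hsum, hA1z, hA2z]; simp
    have htrZ : trace Z = 0 := by
      have h9 : trace S = trace Z := by
        rw [hSdef, Matrix.trace_smul, Matrix.trace_add, Matrix.trace_transpose, smul_eq_mul]
        ring
      rw [hS0] at h9
      simpa using h9.symm
    have hfneg1 : f (-1) = 0 := by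
      rw [hfZ, Matrix.transpose_neg, Matrix.transpose_one, Matrix.neg_mul, Matrix.one_mul,
        Matrix.trace_neg, htrZ, neg_zero]
    have hlt := hfs _ hneg1mem
    rw [hfneg1] at hlt
    rw [hfΦ, hS0] at huΦ
    simp only [Matrix.mul_zero, Matrix.trace_zero] at huΦ
    linarith

end
end

section
/- (Fault hiding under invariance) Suppose S ⊆ ℝⁿ is invariant under A₁+D₁C and A₂+D₂C and S ⊆ ker(HC), and suppose the fault signatures satisfy L₂¹, L₂² ∈ S. Then for the output-injected system ω(i+1,j+1) = (A₁+D₁C)ω(i,j+1) + (A₂+D₂C)ω(i+1,j) + L₂¹f₂(i,j+1) + L₂²f₂(i+1,j), with boundary data in S, the filtered output HCω(i,j) is identically zero for every fault signal f₂; i.e., the fault f₂ is decoupled from the output HCω. -/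
/-- (Fault hiding under invariance) If S is invariant under
A₁+D₁C and A₂+D₂C, S ⊆ ker(HC), and the fault signatures L₂¹, L₂² lie in S,
then for the output-injected system
ω(i+1,j+1) = (A₁+D₁C)ω(i,j+1) + (A₂+D₂C)ω(i+1,j) + L₂¹f₂(i,j+1) + L₂²f₂(i+1,j)
with boundary data in S, the filtered output HCω(i,j) is identically zero for
every fault signal f₂. -/
theorem stmt_19 (n q r : ℕ) (A₁ A₂ : Matrix (Fin n) (Fin n) ℝ)
    (C : Matrix (Fin q) (Fin n) ℝ) (D₁ D₂ : Matrix (Fin n) (Fin q) ℝ)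
    (H : Matrix (Fin r) (Fin q) ℝ)
    (S : Submodule ℝ (Fin n → ℝ))
    (hS1 : S.map (A₁ + D₁ * C).mulVecLin ≤ S)
    (hS2 : S.map (A₂ + D₂ * C).mulVecLin ≤ S)
    (hSker : S ≤ LinearMap.ker (H * C).mulVecLin)
    (L₂₁ L₂₂ : Fin n → ℝ) (hL1 : L₂₁ ∈ S) (hL2 : L₂₂ ∈ S)
    (f₂ : ℕ → ℕ → ℝ) (ω : ℕ → ℕ → (Fin n → ℝ))
    (hrec : ∀ i j : ℕ, ω (i + 1) (j + 1) =
      (A₁ + D₁ * C).mulVec (ω i (j + 1)) + (A₂ + D₂ * C).mulVec (ω (i + 1) j) +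
        f₂ i (j + 1) • L₂₁ + f₂ (i + 1) j • L₂₂)
    (hbd1 : ∀ i : ℕ, ω i 0 ∈ S) (hbd2 : ∀ j : ℕ, ω 0 j ∈ S) :
    ∀ i j : ℕ, H.mulVec (C.mulVec (ω i j)) = 0 := by
  have hmem : ∀ i j : ℕ, ω i j ∈ S := by
    intro i
    induction i with
    | zero => exact hbd2
    | succ i ih =>
      intro j
      induction j with
      | zero => exact hbd1 (i + 1)
      | succ j ihj =>
        rw [hrec i j]
        exact S.add_mem (S.add_mem (S.add_mem
          (hS1 ⟨ω i (j+1), ih (j+1), rfl⟩) (hS2 ⟨ω (i+1) j, ihj, rfl⟩))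
          (S.smul_mem _ hL1)) (S.smul_mem _ hL2)
  intro i j
  have := hSker (hmem i j)
  simpa [Matrix.mulVecLin_apply, Matrix.mulVec_mulVec] using this
end
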